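/- Let (M,c) be a coloured binary matroid with ε(M) = 2·r(M), in which every colour class has at most two elements except exactly one colour class, which consists of three elements forming a 3-circuit of M. Then M has a rainbow circuit. -/

import Mathlib

open Matroid
open scoped symmDiff Classical

namespace RainbowPaper

variable {α : Type*} {κ : Type*}

/-- A circuit of a matroid: a minimal dependent set. -/
def Circuit (M : Matroid α) (C : Set α) : Prop :=
  M.Dep C ∧ ∀ D, D ⊂ C → ¬ M.Dep D

/-- The rank of a set in a matroid: the supremum of the cardinalities of its
independent subsets. -/
noncomputable def rkSet (M : Matroid α) (X : Set α) : ℕ :=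
  sSup {n | ∃ I, M.Indep I ∧ I ⊆ X ∧ I.ncard = n}

/-- The rank of a matroid. -/
noncomputable def rk (M : Matroid α) : ℕ := rkSet M M.E

/-- A matroid is simple if every subset of the ground set with at most two
elements is independent (no loops, no parallel pairs). -/
def Simple (M : Matroid α) : Prop := ∀ X ⊆ M.E, X.ncard ≤ 2 → M.Indep X

/-- A matroid is binary if it is representable over `GF(2)`. -/
def IsBinary (M : Matroid α) : Prop :=
  ∃ (n : ℕ) (φ : α → (Fin n → ZMod 2)),
    ∀ I ⊆ M.E, (M.Indep I ↔ LinearIndependent (ZMod 2) (fun e : I => φ e.1))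

/-- A matroid is regular if it is representable over every field. -/
def IsRegular (M : Matroid α) : Prop :=
  ∀ (F : Type) [Field F], ∃ (n : ℕ) (φ : α → (Fin n → F)),
    ∀ I ⊆ M.E, (M.Indep I ↔ LinearIndependent F (fun e : I => φ e.1))

/-- The signed incidence vector of an edge with given endpoints. -/
noncomputable def incVec {V : Type} (p : V × V) : V → ℚ :=
  fun v => (if v = p.1 then (1 : ℚ) else 0) - (if v = p.2 then (1 : ℚ) else 0)

/-- A matroid is graphic if it is the cycle matroid of a graph, equivalently it is
represented by the signed incidence vectors of the edges of some graph. -/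
def IsGraphic (M : Matroid α) : Prop :=
  ∃ (V : Type) (ends : α → V × V),
    ∀ I ⊆ M.E, (M.Indep I ↔ LinearIndependent ℚ (fun e : I => incVec (ends e.1)))

/-- A matroid is cographic if its dual is graphic. -/
def IsCographic (M : Matroid α) : Prop := IsGraphic M✶

/-- The colour class of the colour `s` in the coloured matroid `(M, c)`. -/
def colourClass (M : Matroid α) (c : α → κ) (s : κ) : Set α := {e ∈ M.E | c e = s}

/-- A rainbow circuit: a circuit on which the colouring is injective. -/
def RainbowCircuit (M : Matroid α) (c : α → κ) (C : Set α) : Prop :=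
  Circuit M C ∧ Set.InjOn c C

/-- A coloured matroid is circuit-achromatic if it has no rainbow circuit. -/
def CircuitAchromatic (M : Matroid α) (c : α → κ) : Prop :=
  ∀ C, Circuit M C → ¬ Set.InjOn c C

/-- The union of the first `j` colour classes in an enumeration `f` of the colours. -/
def initialUnion (M : Matroid α) (c : α → κ) {k : ℕ} (f : Fin k → κ) (j : Fin k) : Set α :=
  ⋃ i ∈ Set.Iic j, colourClass M c (f i)

/-- A colouring of a matroid is stratified if its (nonempty) colour classes can be
enumerated `X_{i_1}, …, X_{i_k}` so that each initial union
`S_j = X_{i_1} ∪ ⋯ ∪ X_{i_j}` is closed and `1 ≤ r(S_1) < r(S_2) < ⋯ < r(S_k) = r(M)`. -/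
def Stratified (M : Matroid α) (c : α → κ) : Prop :=
  ∃ (k : ℕ) (f : Fin k → κ),
    Function.Injective f ∧
    (∀ e ∈ M.E, ∃ j, c e = f j) ∧
    (∀ j, (colourClass M c (f j)).Nonempty) ∧
    (∀ j, M.closure (initialUnion M c f j) = initialUnion M c f j) ∧
    StrictMono (fun j => rkSet M (initialUnion M c f j)) ∧
    (∀ j, 1 ≤ rkSet M (initialUnion M c f j)) ∧
    (∀ j : Fin k, j.val = k - 1 → rkSet M (initialUnion M c f j) = rk M)

/-- A short rainbow circuit pair: two disjoint rainbow circuits whose sizes sum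
to at most `r(M) + 2`. -/
def SRCP (M : Matroid α) (c : α → κ) (C₁ C₂ : Set α) : Prop :=
  RainbowCircuit M c C₁ ∧ RainbowCircuit M c C₂ ∧ Disjoint C₁ C₂ ∧
    C₁.ncard + C₂.ncard ≤ rk M + 2

/-- A short rainbow circuit 4-tuple: four rainbow circuits of total size at most
`2 r(M) + 4` such that no element belongs to more than two of them. -/
def SRC4 (M : Matroid α) (c : α → κ) (C : Fin 4 → Set α) : Prop :=
  (∀ i, RainbowCircuit M c (C i)) ∧
  (∑ i, (C i).ncard) ≤ 2 * rk M + 4 ∧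
  (∀ e : α, (Finset.univ.filter (fun i => e ∈ C i)).card ≤ 2)

/-!
Suppose no circuit is rainbow, so every rainbow set is independent. Outside the triangle
`T = {a, b, c}` lie `2r - 3` elements in colour classes of size at most two, so a transversal `R`
of their colours has at least `r - 1` elements, and `R + t` is rainbow, hence independent, for
each `t ∈ T`. Over `GF(2)` the triangle gives `φ a + φ b + φ c = 0`. If `R + a + b` were dependent,
`φ a = φ b + z` with `z ∈ span φ(R)` (the coefficient of `φ b` cannot be `0` since `R + a` is
independent), so `φ c = z` and `R + c` would be dependent. Thus `R + a + b` is an independent set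
of size at least `r + 1`, which is absurd.
-/

lemma _root_.ZMod.eq_zero_or_eq_one (t : ZMod 2) : t = 0 ∨ t = 1 := by
  revert t
  decide

lemma _root_.Set.ncard_le_mul_ncard_image {β : Type*} {f : α → β} {s : Set α} (hs : s.Finite)
    {n : ℕ} (hn : ∀ b, (s ∩ f ⁻¹' {b}).ncard ≤ n) : s.ncard ≤ n * (f '' s).ncard := by
  classical
  lift s to Finset α using hs
  rw [Set.ncard_coe_finset, ← Finset.coe_image, Set.ncard_coe_finset]
  refine Finset.card_le_mul_card_image s n fun b _ => ?_
  simpa [← Set.ncard_coe_finset, Set.sep_mem_eq, Set.preimage, Set.inter_def] using hn b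

section ZModTwo

variable {ι V : Type*} [AddCommGroup V] [Module (ZMod 2) V] {f : ι → V}

lemma _root_.add_add_eq_zero_of_not_linearIndepOn_triple {a b c : ι} (hab : a ≠ b)
    (hac : a ≠ c) (hbci : LinearIndepOn (ZMod 2) f {b, c}) (habi : LinearIndepOn (ZMod 2) f {a, b})
    (haci : LinearIndepOn (ZMod 2) f {a, c}) (habc : ¬ LinearIndepOn (ZMod 2) f {a, b, c}) :
    f a + f b + f c = 0 := by
  rw [linearIndepOn_insert (by simp [hab, hac]), not_and_not_right, Set.image_pair] at habc
  obtain ⟨t, u, hfa⟩ := Submodule.mem_span_pair.1 (habc hbci)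
  obtain rfl | rfl := t.eq_zero_or_eq_one <;> obtain rfl | rfl := u.eq_zero_or_eq_one <;>
    simp only [zero_smul, one_smul, add_zero, zero_add] at hfa
  · exact absurd hfa.symm (habi.ne_zero (by simp))
  · exact absurd (haci.injOn (by simp) (by simp) hfa.symm) hac
  · exact absurd (habi.injOn (by simp) (by simp) hfa.symm) hab
  · rw [← hfa, add_assoc, ZModModule.add_self]

lemma _root_.LinearIndepOn.insert_insert_of_add_add_eq_zero {s : Set ι} {a b c : ι}
    (has : a ∉ s) (hab : a ≠ b) (hcs : c ∉ s) (habc : f a + f b + f c = 0)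
    (ha : LinearIndepOn (ZMod 2) f (insert a s)) (hb : LinearIndepOn (ZMod 2) f (insert b s))
    (hc : LinearIndepOn (ZMod 2) f (insert c s)) :
    LinearIndepOn (ZMod 2) f (insert a (insert b s)) := by
  rw [linearIndepOn_insert (by simp [hab, has]), Set.image_insert_eq]
  refine ⟨hb, fun hspan => ?_⟩
  obtain ⟨t, z, hz, hfa⟩ := Submodule.mem_span_insert.1 hspan
  obtain rfl | rfl := t.eq_zero_or_eq_one
  · rw [zero_smul, zero_add] at hfa
    exact ((linearIndepOn_insert has).1 ha).2 (hfa ▸ hz)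
  · rw [one_smul] at hfa
    have hfc : f c = z := by
      rw [← sub_eq_zero, ZModModule.sub_eq_add, ← habc, hfa, add_right_comm _ z,
        ZModModule.add_self, zero_add, add_comm]
    exact ((linearIndepOn_insert hcs).1 hc).2 (hfc ▸ hz)

end ZModTwo

lemma circuit_iff_isCircuit {M : Matroid α} {C : Set α} : Circuit M C ↔ M.IsCircuit C := by
  rw [isCircuit_iff_forall_ssubset]
  exact and_congr_right fun hC => forall₂_congr fun D hD =>
    not_dep_iff (hD.subset.trans hC.subset_ground)

lemma ncard_le_rk {M : Matroid α} (hfin : M.E.Finite) {I : Set α} (hI : M.Indep I) :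
    I.ncard ≤ rk M :=
  le_csSup ⟨M.E.ncard, fun _ ⟨_, hJ, _, hJn⟩ => hJn ▸ Set.ncard_le_ncard hJ.subset_ground hfin⟩
    ⟨I, hI, hI.subset_ground, rfl⟩

lemma IsBinary.indep_insert_insert_of_isCircuit {M : Matroid α} (hM : IsBinary M)
    {a b c : α} {I : Set α} (hT : M.IsCircuit {a, b, c}) (hab : a ≠ b) (hac : a ≠ c)
    (hbc : b ≠ c) (haI : a ∉ I) (hcI : c ∉ I) (ha : M.Indep (insert a I))
    (hb : M.Indep (insert b I)) (hc : M.Indep (insert c I)) :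
    M.Indep (insert a (insert b I)) := by
  obtain ⟨n, φ, hφ⟩ := hM
  have hTE := hT.subset_ground
  have hsub : ∀ {X : Set α}, X ⊂ {a, b, c} → LinearIndepOn (ZMod 2) φ X := fun hX =>
    (hφ _ (hX.subset.trans hTE)).1 (hT.ssubset_indep hX)
  have hsum : φ a + φ b + φ c = 0 := by
    refine add_add_eq_zero_of_not_linearIndepOn_triple hab hac
      (hsub (Set.ssubset_insert (by simp [hab, hac]))) (hsub ?_) (hsub ?_)
      fun h => hT.dep.not_indep ((hφ _ hTE).2 h)
    · rw [Set.ssubset_iff_of_subset (by simp [Set.insert_subset_iff])]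
      exact ⟨c, by simp, by simp [hac.symm, hbc.symm]⟩
    · rw [Set.ssubset_iff_of_subset (by simp [Set.insert_subset_iff])]
      exact ⟨b, by simp, by simp [hab.symm, hbc]⟩
  refine (hφ _ (Set.insert_subset (hTE (by simp)) hb.subset_ground)).2 ?_
  exact LinearIndepOn.insert_insert_of_add_add_eq_zero haI hab hcI hsum
    ((hφ _ ha.subset_ground).1 ha) ((hφ _ hb.subset_ground).1 hb) ((hφ _ hc.subset_ground).1 hc)

section Coloured

variable {M : Matroid α} {c : α → κ}

lemma CircuitAchromatic.indep_of_injOn (h : CircuitAchromatic M c) {X : Set α} (hX : X ⊆ M.E)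
    (hinj : Set.InjOn c X) : M.Indep X := by
  by_contra hdep
  obtain ⟨C, hCX, hC⟩ := ((not_indep_iff hX).1 hdep).exists_isCircuit_subset
  exact h C (circuit_iff_isCircuit.2 hC) (hinj.mono hCX)

lemma exists_injOn_subset_sdiff_colourClass (hfin : M.E.Finite) {s₀ : κ}
    (hbd : ∀ s, s ≠ s₀ → (colourClass M c s).ncard ≤ 2) :
    ∃ R ⊆ M.E \ colourClass M c s₀, Set.InjOn c R ∧
      M.E.ncard ≤ 2 * R.ncard + (colourClass M c s₀).ncard := by
  set T := colourClass M c s₀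
  obtain ⟨R, hRsub, hRbij⟩ := (M.E \ T).exists_subset_bijOn c
  have hfibre : ∀ s, ((M.E \ T) ∩ c ⁻¹' {s}).ncard ≤ 2 := by
    intro s
    obtain rfl | hs := eq_or_ne s s₀
    · have hempty : (M.E \ T) ∩ c ⁻¹' {s} = ∅ :=
        Set.eq_empty_of_forall_notMem fun e he => he.1.2 ⟨he.1.1, he.2⟩
      simp [hempty]
    · exact (Set.ncard_le_ncard (t := colourClass M c s) (fun e he => ⟨he.1.1, he.2⟩)
        (hfin.subset fun _ h => h.1)).trans (hbd s hs)
  have hcount := Set.ncard_le_mul_ncard_image hfin.sdiff hfibre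
  rw [← hRbij.image_eq, hRbij.injOn.ncard_image] at hcount
  have hT : T ⊆ M.E := fun _ he => he.1
  have hdiff := Set.ncard_sdiff hT (hfin.subset hT)
  exact ⟨R, hRsub, hRbij.injOn, by omega⟩

lemma CircuitAchromatic.ncard_add_two_le_rk (h : CircuitAchromatic M c) (hM : IsBinary M)
    (hfin : M.E.Finite) {s₀ : κ} (hT : Circuit M (colourClass M c s₀))
    (hT3 : (colourClass M c s₀).ncard = 3) {R : Set α} (hR : R ⊆ M.E \ colourClass M c s₀)
    (hinj : Set.InjOn c R) : R.ncard + 2 ≤ rk M := by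
  set T := colourClass M c s₀
  have hRT : ∀ x ∈ T, x ∉ R := fun x hx hxR => (hR hxR).2 hx
  have hindep : ∀ x ∈ T, M.Indep (insert x R) := fun x hx =>
    h.indep_of_injOn (Set.insert_subset hx.1 (hR.trans Set.sdiff_subset))
      ((Set.injOn_insert (hRT x hx)).2 ⟨hinj, fun ⟨e, heR, hce⟩ =>
        hRT e ⟨(hR heR).1, hce.trans hx.2⟩ heR⟩)
  obtain ⟨a, b, c', hab, hac, hbc, hTabc⟩ := Set.ncard_eq_three.1 hT3
  have hmem : a ∈ T ∧ b ∈ T ∧ c' ∈ T := by simp [hTabc]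
  have habR := hM.indep_insert_insert_of_isCircuit (hTabc ▸ circuit_iff_isCircuit.1 hT)
    hab hac hbc (hRT a hmem.1) (hRT c' hmem.2.2) (hindep a hmem.1) (hindep b hmem.2.1)
    (hindep c' hmem.2.2)
  have hRfin : R.Finite := hfin.subset (hR.trans Set.sdiff_subset)
  have hle := ncard_le_rk hfin habR
  rwa [Set.ncard_insert_of_notMem (by simp [hab, hRT a hmem.1]) (hRfin.insert b),
    Set.ncard_insert_of_notMem (hRT b hmem.2.1) hRfin] at hle

end Coloured

/-- a coloured binary matroid with `2 r(M)` elements in which every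
colour class has at most two elements, except exactly one colour class which is a
3-circuit, has a rainbow circuit. -/
theorem rainbow_of_triangle_class (M : Matroid α) (hM : IsBinary M)
    (hfin : M.E.Finite) (hcard : M.E.ncard = 2 * rk M) (c : α → κ)
    (s₀ : κ) (hs₀ : Circuit M (colourClass M c s₀))
    (hs₀card : (colourClass M c s₀).ncard = 3)
    (hbd : ∀ s, s ≠ s₀ → (colourClass M c s).ncard ≤ 2) :
    ∃ C, RainbowCircuit M c C := by
  by_contra hno
  have hach : CircuitAchromatic M c := fun C hC hinj => hno ⟨C, hC, hinj⟩
  obtain ⟨R, hR, hinj, hcount⟩ := exists_injOn_subset_sdiff_colourClass hfin hbd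
  have hrk := hach.ncard_add_two_le_rk hM hfin hs₀ hs₀card hR hinj
  omega

end RainbowPaper
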